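/- Let G = (A;E) be a countably infinite graph with the extension property, let m ≥ 1, p = 2m + 1, and R ∈ {E,N}. Then there exists a p-ary quasi near-unanimity operation f : A^p → A such that: (1) for all u,v ∈ A^p, f(u) = f(v) iff u = v or there is c ∈ A such that both u and v have main value c; (2) f preserves E and N; (3) if u has main value c and v has main value d, then (f(u),f(v)) ∈ R iff (c,d) ∈ R; and (4) if u has main value c, v has no main value, and there is a set I of at least m + 1 coordinates with (c,v[i]) ∈ R for all i ∈ I, then (f(u),f(v)) ∈ R. -/
import Mathlib


universe u

variable {A : Type u}

/-- Non-adjacency relation `N` of a graph with edge relation `E`. -/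
def NRel (E : A → A → Prop) (a b : A) : Prop := a ≠ b ∧ ¬ E a b

/-- `uu O` denotes `O ∪ =`. -/
def uu (O : A → A → Prop) (a b : A) : Prop := O a b ∨ a = b

/-- `E` is the edge relation of a simple graph: symmetric and irreflexive. -/
def IsSimpleGraph (E : A → A → Prop) : Prop :=
  (∀ a b, E a b → E b a) ∧ (∀ a, ¬ E a a)

/-- An `n`-ary operation preserves an `m`-ary relation. -/
def Preserves {n m : ℕ} (f : (Fin n → A) → A) (R : Set (Fin m → A)) : Prop :=
  ∀ t : Fin n → (Fin m → A), (∀ i, t i ∈ R) → (fun j => f (fun i => t i j)) ∈ R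

/-- An `n`-ary operation preserves a binary relation `S`. -/
def PreservesRel {n : ℕ} (f : (Fin n → A) → A) (S : A → A → Prop) : Prop :=
  ∀ u v : Fin n → A, (∀ i, S (u i) (v i)) → S (f u) (f v)

/-- A binary (curried) operation preserves an `m`-ary relation. -/
def Preserves2 {m : ℕ} (f : A → A → A) (R : Set (Fin m → A)) : Prop :=
  ∀ t₁ t₂, t₁ ∈ R → t₂ ∈ R → (fun j => f (t₁ j) (t₂ j)) ∈ R

/-- A ternary (curried) operation preserves an `m`-ary relation. -/
def Preserves3 {m : ℕ} (f : A → A → A → A) (R : Set (Fin m → A)) : Prop :=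
  ∀ t₁ t₂ t₃, t₁ ∈ R → t₂ ∈ R → t₃ ∈ R → (fun j => f (t₁ j) (t₂ j) (t₃ j)) ∈ R

/-- `t` is an `OP`-tuple: `(t[1],t[2]) ∈ O` and `(t[3],t[4]) ∈ P`. -/
def IsOP (O P : A → A → Prop) (t : Fin 4 → A) : Prop := O (t 0) (t 1) ∧ P (t 2) (t 3)

/-- A quaternary relation entails a formula `ψ(x₁,x₂,x₃,x₄)`. -/
def Entails (R : Set (Fin 4 → A)) (ψ : A → A → A → A → Prop) : Prop :=
  ∀ t ∈ R, ψ (t 0) (t 1) (t 2) (t 3)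

/-- `R` efficiently entails `S₁(x₁,x₂) → S₂(x₃,x₄)`. -/
def EffEntails (R : Set (Fin 4 → A)) (S₁ S₂ : A → A → Prop) : Prop :=
  (∀ t ∈ R, S₁ (t 0) (t 1) → S₂ (t 2) (t 3)) ∧
  (∃ t ∈ R, S₁ (t 0) (t 1) ∧ S₂ (t 2) (t 3)) ∧
  (∃ t ∈ R, ¬ S₁ (t 0) (t 1) ∧ ¬ S₂ (t 2) (t 3))

/-- `f` is a quasi near-unanimity operation. -/
def IsQnu {k : ℕ} (f : (Fin k → A) → A) : Prop :=
  ∀ x y : A, ∀ j : Fin k, f (Function.update (fun _ => x) j y) = f (fun _ => x)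

/-- `α` is an automorphism of the graph `(A;E)`. -/
def IsGraphAuto (E : A → A → Prop) (α : A ≃ A) : Prop := ∀ a b, E (α a) (α b) ↔ E a b

/-- `R` is invariant under all automorphisms of `(A;E)`. -/
def AutoInvariant {m : ℕ} (E : A → A → Prop) (R : Set (Fin m → A)) : Prop :=
  ∀ α : A ≃ A, IsGraphAuto E α → ∀ t ∈ R, (fun i => α (t i)) ∈ R

/-- The extension property of the random graph. -/
def ExtensionProperty (E : A → A → Prop) : Prop :=
  ∀ U U' : Finset A, Disjoint U U' →
    ∃ v : A, (∀ u ∈ U, E v u) ∧ (∀ u ∈ U', ¬ E v u)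

/-- A binary operation is injective. -/
def BinInj (f : A → A → A) : Prop := Function.Injective (fun p : A × A => f p.1 p.2)

/-- A ternary operation is injective. -/
def TernInj (f : A → A → A → A) : Prop :=
  Function.Injective (fun p : A × A × A => f p.1 p.2.1 p.2.2)

/-- A binary injection is balanced. -/
def BalancedBin (E : A → A → Prop) (f : A → A → A) : Prop :=
  ∀ a₁ a₂ b₁ b₂ : A,
    (((E a₁ b₁ ∧ a₂ = b₂) ∨ (a₁ = b₁ ∧ E a₂ b₂)) → E (f a₁ a₂) (f b₁ b₂)) ∧
    (((NRel E a₁ b₁ ∧ a₂ = b₂) ∨ (a₁ = b₁ ∧ NRel E a₂ b₂)) → NRel E (f a₁ a₂) (f b₁ b₂))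

/-- A binary operation is `E`-dominated. -/
def EDominated (E : A → A → Prop) (f : A → A → A) : Prop :=
  ∀ a₁ a₂ b₁ b₂ : A, ((a₁ = b₁ ∧ a₂ ≠ b₂) ∨ (a₁ ≠ b₁ ∧ a₂ = b₂)) → E (f a₁ a₂) (f b₁ b₂)

/-- A binary operation is `N`-dominated. -/
def NDominated (E : A → A → Prop) (f : A → A → A) : Prop :=
  ∀ a₁ a₂ b₁ b₂ : A, ((a₁ = b₁ ∧ a₂ ≠ b₂) ∨ (a₁ ≠ b₁ ∧ a₂ = b₂)) → NRel E (f a₁ a₂) (f b₁ b₂)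

/-- A binary operation is of behaviour min. -/
def BehMin (E : A → A → Prop) (f : A → A → A) : Prop :=
  ∀ a₁ a₂ b₁ b₂ : A, a₁ ≠ b₁ → a₂ ≠ b₂ →
    (E (f a₁ a₂) (f b₁ b₂) ↔ (E a₁ b₁ ∧ E a₂ b₂))

/-- A binary operation is of behaviour max. -/
def BehMax (E : A → A → Prop) (f : A → A → A) : Prop :=
  ∀ a₁ a₂ b₁ b₂ : A, a₁ ≠ b₁ → a₂ ≠ b₂ →
    (NRel E (f a₁ a₂) (f b₁ b₂) ↔ (NRel E a₁ b₁ ∧ NRel E a₂ b₂))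

/-- A binary operation is of behaviour projection. -/
def BehProj (E : A → A → Prop) (f : A → A → A) : Prop :=
  (∀ a₁ a₂ b₁ b₂ : A, a₁ ≠ b₁ → a₂ ≠ b₂ → (E (f a₁ a₂) (f b₁ b₂) ↔ E a₁ b₁)) ∨
  (∀ a₁ a₂ b₁ b₂ : A, a₁ ≠ b₁ → a₂ ≠ b₂ → (E (f a₁ a₂) (f b₁ b₂) ↔ E a₂ b₂))

/-- A binary operation is of behaviour xor. -/
def BehXor (E : A → A → Prop) (f : A → A → A) : Prop :=
  ∀ a₁ a₂ b₁ b₂ : A, a₁ ≠ b₁ → a₂ ≠ b₂ →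
    (E (f a₁ a₂) (f b₁ b₂) ↔ Xor' (E a₁ b₁) (E a₂ b₂))

/-- A binary operation is of behaviour xnor. -/
def BehXnor (E : A → A → Prop) (f : A → A → A) : Prop :=
  ∀ a₁ a₂ b₁ b₂ : A, a₁ ≠ b₁ → a₂ ≠ b₂ →
    (E (f a₁ a₂) (f b₁ b₂) ↔ (E a₁ b₁ ↔ E a₂ b₂))

/-- A binary operation is `E`-constant: its image induces a clique. -/
def EConstantBin (E : A → A → Prop) (f : A → A → A) : Prop :=
  ∀ a₁ a₂ b₁ b₂ : A, f a₁ a₂ ≠ f b₁ b₂ → E (f a₁ a₂) (f b₁ b₂)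

/-- A binary operation is `N`-constant: its image induces an independent set. -/
def NConstantBin (E : A → A → Prop) (f : A → A → A) : Prop :=
  ∀ a₁ a₂ b₁ b₂ : A, f a₁ a₂ ≠ f b₁ b₂ → NRel E (f a₁ a₂) (f b₁ b₂)

/-- A ternary operation is of behaviour majority. -/
def BehMajority (E : A → A → Prop) (f : A → A → A → A) : Prop :=
  ∀ a₁ a₂ a₃ b₁ b₂ b₃ : A, a₁ ≠ b₁ → a₂ ≠ b₂ → a₃ ≠ b₃ →
    (E (f a₁ a₂ a₃) (f b₁ b₂ b₃) ↔
      ((E a₁ b₁ ∧ E a₂ b₂) ∨ (E a₁ b₁ ∧ E a₃ b₃) ∨ (E a₂ b₂ ∧ E a₃ b₃)))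

/-- A ternary operation is of behaviour minority. -/
def BehMinority (E : A → A → Prop) (f : A → A → A → A) : Prop :=
  ∀ a₁ a₂ a₃ b₁ b₂ b₃ : A, a₁ ≠ b₁ → a₂ ≠ b₂ → a₃ ≠ b₃ →
    (NRel E (f a₁ a₂ a₃) (f b₁ b₂ b₃) ↔
      ((NRel E a₁ b₁ ∧ NRel E a₂ b₂ ∧ NRel E a₃ b₃) ∨
       (E a₁ b₁ ∧ E a₂ b₂ ∧ NRel E a₃ b₃) ∨
       (E a₁ b₁ ∧ NRel E a₂ b₂ ∧ E a₃ b₃) ∨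
       (NRel E a₁ b₁ ∧ E a₂ b₂ ∧ E a₃ b₃)))

/-- A ternary operation hyperplanely has the binary behaviour `P`. -/
def Hyperplanely (P : (A → A → A) → Prop) (f : A → A → A → A) : Prop :=
  ∀ c : A, P (fun x y => f x y c) ∧ P (fun x y => f x c y) ∧ P (fun x y => f c x y)

/-- `n_E(u,s)`: the number of coordinates at which `u` and `s` are `E`-related. -/
noncomputable def nECount {k : ℕ} (E : A → A → Prop) (u s : Fin k → A) : ℕ :=
  {i : Fin k | E (u i) (s i)}.ncard

/-- A constant tuple. -/
def IsConstTuple {k : ℕ} (u : Fin k → A) : Prop := ∃ c, ∀ i, u i = c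

/-- `h` maps any argument containing an `N`-pair to an `N`-pair and behaves like a
minority on `{E,=}`. -/
def HMinority (E : A → A → Prop) (h : A → A → A → A) : Prop :=
  (∀ a₁ a₂ a₃ b₁ b₂ b₃ : A,
    (NRel E a₁ b₁ ∨ NRel E a₂ b₂ ∨ NRel E a₃ b₃) →
      NRel E (h a₁ a₂ a₃) (h b₁ b₂ b₃)) ∧
  (∀ a₁ a₂ a₃ b₁ b₂ b₃ : A,
    uu E a₁ b₁ → uu E a₂ b₂ → uu E a₃ b₃ →
      (E (h a₁ a₂ a₃) (h b₁ b₂ b₃) ↔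
        ((E a₁ b₁ ∧ E a₂ b₂ ∧ E a₃ b₃) ∨
         (E a₁ b₁ ∧ ¬ E a₂ b₂ ∧ ¬ E a₃ b₃) ∨
         (¬ E a₁ b₁ ∧ E a₂ b₂ ∧ ¬ E a₃ b₃) ∨
         (¬ E a₁ b₁ ∧ ¬ E a₂ b₂ ∧ E a₃ b₃))))

/-- A `p`-tuple has main value `c` if all but at most one of its entries
equal `c`. -/
def HasMainValue {p : ℕ} (u : Fin p → A) (c : A) : Prop :=
  ∃ j : Fin p, ∀ i, i ≠ j → u i = c


section Aux

variable {A : Type u}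

private lemma third_coord {p : ℕ} (hp : 3 ≤ p) (j j' : Fin p) :
    ∃ i : Fin p, i ≠ j ∧ i ≠ j' := by
  by_contra h
  push_neg at h
  have hsub : (Finset.univ : Finset (Fin p)) ⊆ {j, j'} := by
    intro i _
    rcases eq_or_ne i j with rfl | hij
    · simp
    · simp [h i hij]
  have : p ≤ 2 := by
    calc p = (Finset.univ : Finset (Fin p)).card := by simp
    _ ≤ ({j, j'} : Finset (Fin p)).card := Finset.card_le_card hsub
    _ ≤ 2 := by
        refine le_trans (Finset.card_insert_le _ _) ?_
        simp
  omega

private lemma mainValue_unique {p : ℕ} (hp : 3 ≤ p) (u : Fin p → A) (c d : A)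
    (hc : HasMainValue u c) (hd : HasMainValue u d) : c = d := by
  obtain ⟨j, hj⟩ := hc
  obtain ⟨j', hj'⟩ := hd
  obtain ⟨i, hij, hij'⟩ := third_coord hp j j'
  rw [← hj i hij, ← hj' i hij']

private lemma ext_strong (E : A → A → Prop) (hG : IsSimpleGraph E)
    (hext : ExtensionProperty E) (U U' F : Finset A) (hUU : Disjoint U U') :
    ∃ v, v ∉ F ∧ (∀ u ∈ U, E v u) ∧ (∀ u ∈ U', ¬ E v u) := by
  classical
  have hb : ∀ w : A, ∃ b, ∀ x ∈ insert w U, E b x := by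
    intro w
    obtain ⟨b, hb1, -⟩ := hext (insert w U) ∅ (by simp)
    exact ⟨b, hb1⟩
  choose b hbspec using hb
  have hUB : Disjoint U (U' ∪ F.image b) := by
    rw [Finset.disjoint_union_right]
    refine ⟨hUU, ?_⟩
    rw [Finset.disjoint_right]
    intro a haB haU
    obtain ⟨w, _, rfl⟩ := Finset.mem_image.mp haB
    exact hG.2 (b w) (hbspec w (b w) (Finset.mem_insert_of_mem haU))
  obtain ⟨v, hv1, hv2⟩ := hext U (U' ∪ F.image b) hUB
  refine ⟨v, ?_, hv1, fun u hu => hv2 u (Finset.mem_union_left _ hu)⟩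
  intro hvF
  have h1 : E (b v) v := hbspec v v (Finset.mem_insert_self _ _)
  have h2 : ¬ E v (b v) :=
    hv2 (b v) (Finset.mem_union_right _ (Finset.mem_image_of_mem b hvF))
  exact h2 (hG.1 _ _ h1)

private noncomputable def buildSeq {α : Type u} (P : ∀ n, (Fin n → α) → Prop)
    (h0 : P 0 (fun i => i.elim0))
    (hstep : ∀ n s, P n s → ∃ a, P (n + 1) (Fin.snoc s a)) :
    ∀ n, {s : Fin n → α // P n s}
  | 0 => ⟨fun i => i.elim0, h0⟩
  | n + 1 =>
    let p := buildSeq P h0 hstep n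
    ⟨Fin.snoc p.1 (hstep n p.1 p.2).choose, (hstep n p.1 p.2).choose_spec⟩

private lemma exists_seq {α : Type u} (P : ∀ n, (Fin n → α) → Prop)
    (h0 : P 0 (fun i => i.elim0))
    (hstep : ∀ n s, P n s → ∃ a, P (n + 1) (Fin.snoc s a)) :
    ∃ f : ℕ → α, ∀ n, P n (fun i : Fin n => f i) := by
  refine ⟨fun n => (buildSeq P h0 hstep (n + 1)).1 (Fin.last n), ?_⟩
  have key : ∀ n (i : Fin n),
      (buildSeq P h0 hstep n).1 i
        = (buildSeq P h0 hstep ((i : ℕ) + 1)).1 (Fin.last (i : ℕ)) := by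
    intro n
    induction n with
    | zero => exact fun i => i.elim0
    | succ n ih =>
      intro i
      rcases Fin.eq_castSucc_or_eq_last i with ⟨j, rfl⟩ | rfl
      · have h1 : (buildSeq P h0 hstep (n + 1)).1 j.castSucc
            = (buildSeq P h0 hstep n).1 j := by
          show (Fin.snoc (buildSeq P h0 hstep n).1 _ : Fin (n+1) → α) j.castSucc = _
          rw [Fin.snoc_castSucc]
        rw [h1, ih j]
        rfl
      · rfl
  intro n
  have h2 : (fun i : Fin n => (buildSeq P h0 hstep ((i : ℕ) + 1)).1 (Fin.last (i : ℕ)))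
      = (buildSeq P h0 hstep n).1 := by
    funext i
    exact (key n i).symm
  show P n (fun i : Fin n => (buildSeq P h0 hstep ((i : ℕ) + 1)).1 (Fin.last (i : ℕ)))
  rw [h2]
  exact (buildSeq P h0 hstep n).2

end Aux

section Embed

variable {A : Type u}

private lemma embed {L : Type v} [Countable L] [Infinite L]
    (E : A → A → Prop) (hG : IsSimpleGraph E) (hext : ExtensionProperty E)
    (rE rN : L → L → Prop)
    (hsE : ∀ l l', rE l l' → rE l' l) (hsN : ∀ l l', rN l l' → rN l' l)
    (hx : ∀ l l', rE l l' → rN l l' → False)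
    (hiE : ∀ l, ¬ rE l l) (hiN : ∀ l, ¬ rN l l) :
    ∃ φ : L → A, Function.Injective φ ∧
      (∀ l l', rE l l' → E (φ l) (φ l')) ∧
      (∀ l l', rN l l' → NRel E (φ l) (φ l')) := by
  classical
  letI : Encodable L := Encodable.ofCountable L
  letI : Denumerable L := Denumerable.ofEncodableOfInfinite L
  let e : ℕ ≃ L := (Denumerable.eqv L).symm
  set P : ∀ n, (Fin n → A) → Prop := fun n s =>
    (∀ i j : Fin n, i ≠ j → s i ≠ s j) ∧
    ∀ i j : Fin n, (j : ℕ) < (i : ℕ) →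
      (rE (e (i : ℕ)) (e (j : ℕ)) → E (s i) (s j)) ∧
      (rN (e (i : ℕ)) (e (j : ℕ)) → NRel E (s i) (s j)) with hP
  have h0 : P 0 (fun i => i.elim0) := ⟨fun i => i.elim0, fun i => i.elim0⟩
  have hstep : ∀ n s, P n s → ∃ a, P (n + 1) (Fin.snoc s a) := by
    intro n s hs
    set U : Finset A :=
      (Finset.univ.filter (fun j : Fin n => rE (e n) (e (j : ℕ)))).image s with hU
    set U' : Finset A :=
      (Finset.univ.filter (fun j : Fin n => rN (e n) (e (j : ℕ)))).image s with hU'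
    have hdisj : Disjoint U U' := by
      rw [Finset.disjoint_left]
      intro a haU haU'
      obtain ⟨j, hj, rfl⟩ := Finset.mem_image.mp haU
      obtain ⟨j', hj', hsj⟩ := Finset.mem_image.mp haU'
      have hjj : j' = j := by
        by_contra hne
        exact hs.1 j' j hne hsj
      rw [hjj] at hj'
      exact hx _ _ (Finset.mem_filter.mp hj).2 (Finset.mem_filter.mp hj').2
    obtain ⟨a, haF, haU, haU'⟩ := ext_strong E hG hext U U' (Finset.univ.image s) hdisj
    have haneq : ∀ j : Fin n, a ≠ s j := by
      intro j h
      exact haF (h ▸ Finset.mem_image_of_mem s (Finset.mem_univ j))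
    refine ⟨a, ?_, ?_⟩
    · intro i j hij
      rcases Fin.eq_castSucc_or_eq_last i with ⟨i', rfl⟩ | rfl <;>
        rcases Fin.eq_castSucc_or_eq_last j with ⟨j', rfl⟩ | rfl
      · rw [Fin.snoc_castSucc, Fin.snoc_castSucc]
        exact hs.1 i' j' (fun h => hij (by rw [h]))
      · rw [Fin.snoc_castSucc, Fin.snoc_last]
        exact fun h => haneq i' h.symm
      · rw [Fin.snoc_castSucc, Fin.snoc_last]
        exact haneq j'
      · exact absurd rfl hij
    · intro i j hlt
      rcases Fin.eq_castSucc_or_eq_last i with ⟨i', rfl⟩ | rfl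
      · have hj : (j : ℕ) < n := lt_of_lt_of_le hlt
            (Nat.lt_succ_iff.mp i'.castSucc.isLt)
        rcases Fin.eq_castSucc_or_eq_last j with ⟨j', rfl⟩ | rfl
        · rw [Fin.snoc_castSucc, Fin.snoc_castSucc]
          exact hs.2 i' j' (by simpa using hlt)
        · simp [Fin.val_last] at hj
      · rcases Fin.eq_castSucc_or_eq_last j with ⟨j', rfl⟩ | rfl
        · rw [Fin.snoc_last, Fin.snoc_castSucc]
          have hmem : s j' ∈ Finset.univ.image s :=
            Finset.mem_image_of_mem s (Finset.mem_univ j')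
          constructor
          · intro hrE
            apply haU
            rw [hU]
            exact Finset.mem_image_of_mem s
              (Finset.mem_filter.mpr ⟨Finset.mem_univ j', by simpa using hrE⟩)
          · intro hrN
            refine ⟨haneq j', ?_⟩
            apply haU'
            rw [hU']
            exact Finset.mem_image_of_mem s
              (Finset.mem_filter.mpr ⟨Finset.mem_univ j', by simpa using hrN⟩)
        · exact absurd hlt (lt_irrefl _)
  obtain ⟨ψ, hψ⟩ := exists_seq P h0 hstep
  have hmain : ∀ a b : ℕ, b < a →
      (ψ a ≠ ψ b) ∧ (rE (e a) (e b) → E (ψ a) (ψ b)) ∧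
      (rN (e a) (e b) → NRel E (ψ a) (ψ b)) := by
    intro a b hab
    have h := hψ (a + 1)
    have hne : (⟨a, Nat.lt_succ_self a⟩ : Fin (a+1)) ≠ ⟨b, Nat.lt_succ_of_lt hab⟩ :=
      Fin.ne_of_val_ne (Nat.ne_of_gt hab)
    refine ⟨h.1 _ _ hne, ?_⟩
    exact h.2 ⟨a, Nat.lt_succ_self a⟩ ⟨b, Nat.lt_succ_of_lt hab⟩ hab
  refine ⟨fun l => ψ (e.symm l), ?_, ?_, ?_⟩
  · intro l l' h
    by_contra hne
    have hsy : e.symm l ≠ e.symm l' := fun hh => hne (by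
      have := congrArg e hh
      simpa using this)
    rcases lt_or_gt_of_ne hsy with hlt | hlt
    · exact (hmain _ _ hlt).1 h.symm
    · exact (hmain _ _ hlt).1 h
  · intro l l' hr
    have hne : e.symm l ≠ e.symm l' := by
      intro hh
      have : l = l' := by have := congrArg e hh; simpa using this
      exact hiE l (this ▸ hr)
    rcases lt_or_gt_of_ne hne with hlt | hlt
    · have := (hmain _ _ hlt).2.1 (by simpa using hsE _ _ hr)
      exact hG.1 _ _ this
    · exact (hmain _ _ hlt).2.1 (by simpa using hr)
  · intro l l' hr
    have hne : e.symm l ≠ e.symm l' := by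
      intro hh
      have : l = l' := by have := congrArg e hh; simpa using this
      exact hiN l (this ▸ hr)
    rcases lt_or_gt_of_ne hne with hlt | hlt
    · have := (hmain _ _ hlt).2.2 (by simpa using hsN _ _ hr)
      exact ⟨this.1.symm, fun h => this.2 (hG.1 _ _ h)⟩
    · exact (hmain _ _ hlt).2.2 (by simpa using hr)

end Embed

section Constr

variable {A : Type u}

open Classical in
/-- Number of coordinates `i` with `S c (v i)`. -/
private noncomputable def cnt {p : ℕ} (S : A → A → Prop) (c : A) (v : Fin p → A) : ℕ :=
  (Finset.univ.filter (fun i => S c (v i))).card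

private theorem construction (E : A → A → Prop) (hG : IsSimpleGraph E)
    [Countable A] [Infinite A] (hext : ExtensionProperty E)
    (m tE tN : ℕ) (hm : 1 ≤ m) (htE : tE ≤ 2 * m) (htN : tN ≤ 2 * m)
    (hsum : 2 * m + 1 < tE + tN) :
    ∃ f : (Fin (2 * m + 1) → A) → A,
      IsQnu f ∧
      (∀ u v : Fin (2 * m + 1) → A,
        f u = f v ↔ (u = v ∨ ∃ c, HasMainValue u c ∧ HasMainValue v c)) ∧
      PreservesRel f E ∧ PreservesRel f (NRel E) ∧
      (∀ (u v : Fin (2 * m + 1) → A) (c d : A),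
        HasMainValue u c → HasMainValue v d → c ≠ d →
        (E (f u) (f v) ↔ E c d)) ∧
      (∀ (u v : Fin (2 * m + 1) → A) (c : A),
        HasMainValue u c → (¬ ∃ d, HasMainValue v d) →
        (tE ≤ cnt E c v → E (f u) (f v)) ∧
        (tN ≤ cnt (NRel E) c v → NRel E (f u) (f v))) := by
  classical
  have hp3 : 3 ≤ 2 * m + 1 := by omega
  have huniq : ∀ (u : Fin (2 * m + 1) → A) c d,
      HasMainValue u c → HasMainValue u d → c = d :=
    fun u c d hc hd => mainValue_unique hp3 u c d hc hd
  -- counting helpers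
  have hcnt_ge : ∀ (S : A → A → Prop) (c : A) (v : Fin (2 * m + 1) → A)
      (j : Fin (2 * m + 1)), (∀ i, i ≠ j → S c (v i)) → 2 * m ≤ cnt S c v := by
    intro S c v j hS
    have hsub : Finset.univ.erase j ⊆ Finset.univ.filter (fun i => S c (v i)) := by
      intro i hi
      rw [Finset.mem_erase] at hi
      exact Finset.mem_filter.mpr ⟨Finset.mem_univ i, hS i hi.1⟩
    have := Finset.card_le_card hsub
    rw [Finset.card_erase_of_mem (Finset.mem_univ j)] at this
    simp only [Finset.card_univ, Fintype.card_fin] at this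
    unfold cnt
    omega
  have hcnt_conflict : ∀ (c : A) (v : Fin (2 * m + 1) → A),
      tE ≤ cnt E c v → tN ≤ cnt (NRel E) c v → False := by
    intro c v h1 h2
    have hdisj : Disjoint (Finset.univ.filter (fun i => E c (v i)))
        (Finset.univ.filter (fun i => NRel E c (v i))) := by
      rw [Finset.disjoint_left]
      intro i hi hi'
      exact (Finset.mem_filter.mp hi').2.2 (Finset.mem_filter.mp hi).2
    have hle : cnt E c v + cnt (NRel E) c v ≤ 2 * m + 1 := by
      unfold cnt
      rw [← Finset.card_union_of_disjoint hdisj]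
      calc _ ≤ (Finset.univ : Finset (Fin (2*m+1))).card := Finset.card_le_card (by simp)
      _ = 2 * m + 1 := by simp
    omega
  -- the label type
  set L := A ⊕ {v : Fin (2 * m + 1) → A // ¬ ∃ c, HasMainValue v c} with hL
  haveI hLc : Countable L := inferInstance
  haveI hLi : Infinite L := Infinite.of_injective Sum.inl Sum.inl_injective
  let lab : (Fin (2 * m + 1) → A) → L := fun u =>
    if h : ∃ c, HasMainValue u c then Sum.inl h.choose else Sum.inr ⟨u, h⟩
  have hlab_main : ∀ u c, HasMainValue u c → lab u = Sum.inl c := by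
    intro u c hc
    have h : ∃ c, HasMainValue u c := ⟨c, hc⟩
    show (if h : ∃ c, HasMainValue u c then (Sum.inl h.choose : L)
      else Sum.inr ⟨u, h⟩) = Sum.inl c
    rw [dif_pos h]
    exact congrArg Sum.inl (huniq u _ c h.choose_spec hc)
  have hlab_inl : ∀ u c, lab u = Sum.inl c → HasMainValue u c := by
    intro u c h
    by_cases hex : ∃ c, HasMainValue u c
    · have h2 := hlab_main u hex.choose hex.choose_spec
      rw [h2] at h
      injection h with h'
      exact h' ▸ hex.choose_spec
    · have h2 : lab u = Sum.inr ⟨u, hex⟩ := dif_neg hex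
      rw [h2] at h
      exact absurd h (by simp)
  have hlab_inr : ∀ u w, lab u = Sum.inr w → u = w.1 := by
    intro u w h
    by_cases hex : ∃ c, HasMainValue u c
    · rw [hlab_main u hex.choose hex.choose_spec] at h
      exact absurd h (by simp)
    · have h2 : lab u = Sum.inr ⟨u, hex⟩ := dif_neg hex
      rw [h2] at h
      injection h with h'
      rw [← h']
  let reqE : L → L → Prop := fun l l' =>
    match l, l' with
    | Sum.inl c, Sum.inl d => E c d
    | Sum.inl c, Sum.inr v => tE ≤ cnt E c v.1
    | Sum.inr v, Sum.inl c => tE ≤ cnt E c v.1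
    | Sum.inr v, Sum.inr w => v.1 ≠ w.1 ∧ ∀ i, E (v.1 i) (w.1 i)
  let reqN : L → L → Prop := fun l l' =>
    match l, l' with
    | Sum.inl c, Sum.inl d => NRel E c d
    | Sum.inl c, Sum.inr v => tN ≤ cnt (NRel E) c v.1
    | Sum.inr v, Sum.inl c => tN ≤ cnt (NRel E) c v.1
    | Sum.inr v, Sum.inr w => v.1 ≠ w.1 ∧ ∀ i, NRel E (v.1 i) (w.1 i)
  have hNsymm : ∀ a b, NRel E a b → NRel E b a :=
    fun a b h => ⟨h.1.symm, fun he => h.2 (hG.1 _ _ he)⟩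
  have i0 : Fin (2 * m + 1) := ⟨0, by omega⟩
  obtain ⟨φ, hinj, hφE, hφN⟩ := embed E hG hext reqE reqN
    (by rintro (c | v) (d | w) hr
        · exact hG.1 c d hr
        · exact hr
        · exact hr
        · exact ⟨hr.1.symm, fun i => hG.1 _ _ (hr.2 i)⟩)
    (by rintro (c | v) (d | w) hr
        · exact hNsymm c d hr
        · exact hr
        · exact hr
        · exact ⟨hr.1.symm, fun i => hNsymm _ _ (hr.2 i)⟩)
    (by rintro (c | v) (d | w) h1 h2
        · exact h2.2 h1
        · exact hcnt_conflict c w.1 h1 h2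
        · exact hcnt_conflict d v.1 h1 h2
        · exact (h2.2 i0).2 (h1.2 i0))
    (by rintro (c | v)
        · exact hG.2 c
        · exact fun h => h.1 rfl)
    (by rintro (c | v)
        · exact fun h => h.1 rfl
        · exact fun h => h.1 rfl)
  refine ⟨fun u => φ (lab u), ?_, ?_, ?_, ?_, ?_, ?_⟩
  · -- IsQnu
    intro x y j
    show φ (lab (Function.update (fun _ => x) j y)) = φ (lab (fun _ => x))
    have h1 : HasMainValue (Function.update (fun _ => x) j y) x :=
      ⟨j, fun i hij => by rw [Function.update_of_ne hij]⟩
    have h2 : HasMainValue (fun _ : Fin (2 * m + 1) => x) x := ⟨j, fun _ _ => rfl⟩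
    rw [hlab_main _ _ h1, hlab_main _ _ h2]
  · -- equality characterization
    intro u v
    constructor
    · intro h
      have hl : lab u = lab v := hinj h
      rcases hu : lab u with c | w
      · rw [hu] at hl
        exact Or.inr ⟨c, hlab_inl u c hu, hlab_inl v c hl.symm⟩
      · rw [hu] at hl
        exact Or.inl (by rw [hlab_inr u w hu, hlab_inr v w hl.symm])
    · rintro (rfl | ⟨c, hc, hd⟩)
      · rfl
      · show φ (lab u) = φ (lab v)
        rw [hlab_main u c hc, hlab_main v c hd]
  · -- preserves E
    intro u v h
    show E (φ (lab u)) (φ (lab v))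
    apply hφE
    rcases hu : lab u with c | w <;> rcases hv : lab v with d | w'
    · obtain ⟨j, hj⟩ := hlab_inl u c hu
      obtain ⟨j', hj'⟩ := hlab_inl v d hv
      obtain ⟨i, hij, hij'⟩ := third_coord hp3 j j'
      show E c d
      rw [← hj i hij, ← hj' i hij']
      exact h i
    · obtain ⟨j, hj⟩ := hlab_inl u c hu
      have hv1 := hlab_inr v w' hv
      show tE ≤ cnt E c w'.1
      have := hcnt_ge E c w'.1 j (fun i hij => by
        rw [← hv1, ← hj i hij]; exact h i)
      omega
    · obtain ⟨j', hj'⟩ := hlab_inl v d hv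
      have hu1 := hlab_inr u w hu
      show tE ≤ cnt E d w.1
      have := hcnt_ge E d w.1 j' (fun i hij => by
        rw [← hu1, ← hj' i hij]; exact hG.1 _ _ (h i))
      omega
    · have hu1 := hlab_inr u w hu
      have hv1 := hlab_inr v w' hv
      refine ⟨?_, fun i => by rw [← hu1, ← hv1]; exact h i⟩
      intro heq
      have := h i0
      rw [← hu1, ← hv1] at heq
      rw [heq] at this
      exact hG.2 _ this
  · -- preserves N
    intro u v h
    show NRel E (φ (lab u)) (φ (lab v))
    apply hφN
    rcases hu : lab u with c | w <;> rcases hv : lab v with d | w'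
    · obtain ⟨j, hj⟩ := hlab_inl u c hu
      obtain ⟨j', hj'⟩ := hlab_inl v d hv
      obtain ⟨i, hij, hij'⟩ := third_coord hp3 j j'
      show NRel E c d
      rw [← hj i hij, ← hj' i hij']
      exact h i
    · obtain ⟨j, hj⟩ := hlab_inl u c hu
      have hv1 := hlab_inr v w' hv
      show tN ≤ cnt (NRel E) c w'.1
      have := hcnt_ge (NRel E) c w'.1 j (fun i hij => by
        rw [← hv1, ← hj i hij]; exact h i)
      omega
    · obtain ⟨j', hj'⟩ := hlab_inl v d hv
      have hu1 := hlab_inr u w hu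
      show tN ≤ cnt (NRel E) d w.1
      have := hcnt_ge (NRel E) d w.1 j' (fun i hij => by
        rw [← hu1, ← hj' i hij]; exact hNsymm _ _ (h i))
      omega
    · have hu1 := hlab_inr u w hu
      have hv1 := hlab_inr v w' hv
      refine ⟨?_, fun i => by rw [← hu1, ← hv1]; exact h i⟩
      intro heq
      have := h i0
      rw [← hu1, ← hv1] at heq
      rw [heq] at this
      exact this.1 rfl
  · -- main/main
    intro u v c d hc hd hne
    show E (φ (lab u)) (φ (lab v)) ↔ E c d
    rw [hlab_main u c hc, hlab_main v d hd]
    constructor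
    · intro hE
      by_contra hEcd
      have hreq : reqN (Sum.inl c) (Sum.inl d) := ⟨hne, hEcd⟩
      exact (hφN _ _ hreq).2 hE
    · intro hEcd
      exact hφE _ _ (show reqE (Sum.inl c) (Sum.inl d) from hEcd)
  · -- main/none
    intro u v c hc hno
    have hlv : lab v = Sum.inr ⟨v, hno⟩ := dif_neg hno
    constructor
    · intro h
      show E (φ (lab u)) (φ (lab v))
      rw [hlab_main u c hc, hlv]
      exact hφE _ _ (show reqE (Sum.inl c) (Sum.inr ⟨v, hno⟩) from h)
    · intro h
      show NRel E (φ (lab u)) (φ (lab v))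
      rw [hlab_main u c hc, hlv]
      exact hφN _ _ (show reqN (Sum.inl c) (Sum.inr ⟨v, hno⟩) from h)

end Constr

private lemma cnt_ge_of {A : Type u} {p : ℕ} (S : A → A → Prop) (c : A) (v : Fin p → A)
    (I : Finset (Fin p)) (h : ∀ i ∈ I, S c (v i)) : I.card ≤ cnt S c v := by
  classical
  unfold cnt
  exact Finset.card_le_card fun i hi =>
    Finset.mem_filter.mpr ⟨Finset.mem_univ i, h i hi⟩
theorem stmt19 (E : A → A → Prop) (hG : IsSimpleGraph E)
    [Countable A] [Infinite A] (hext : ExtensionProperty E)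
    (m : ℕ) (hm : 1 ≤ m)
    (R₀ : A → A → Prop) (hR₀ : R₀ = E ∨ R₀ = NRel E) :
    ∃ f : (Fin (2 * m + 1) → A) → A,
      IsQnu f ∧
      (∀ u v : Fin (2 * m + 1) → A,
        f u = f v ↔ (u = v ∨ ∃ c, HasMainValue u c ∧ HasMainValue v c)) ∧
      PreservesRel f E ∧ PreservesRel f (NRel E) ∧
      (∀ (u v : Fin (2 * m + 1) → A) (c d : A),
        HasMainValue u c → HasMainValue v d → (R₀ (f u) (f v) ↔ R₀ c d)) ∧
      (∀ (u v : Fin (2 * m + 1) → A) (c : A),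
        HasMainValue u c → (¬ ∃ d, HasMainValue v d) →
        (∃ I : Finset (Fin (2 * m + 1)), m + 1 ≤ I.card ∧ ∀ i ∈ I, R₀ c (v i)) →
        R₀ (f u) (f v)) := by
  classical
  have hp3 : 3 ≤ 2 * m + 1 := by omega
  rcases hR₀ with rfl | rfl
  · obtain ⟨f, hqnu, heq, hpE, hpN, hmm, hmn⟩ :=
      construction R₀ hG hext m (m + 1) (2 * m) hm (by omega) (by omega) (by omega)
    refine ⟨f, hqnu, heq, hpE, hpN, ?_, ?_⟩
    · intro u v c d hc hd
      rcases eq_or_ne c d with rfl | hne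
      · have hfe : f u = f v := (heq u v).mpr (Or.inr ⟨c, hc, hd⟩)
        rw [hfe]
        exact iff_of_false (hG.2 _) (hG.2 _)
      · exact hmm u v c d hc hd hne
    · rintro u v c hc hno ⟨I, hI, hR⟩
      exact (hmn u v c hc hno).1 (le_trans hI (cnt_ge_of R₀ c v I hR))
  · obtain ⟨f, hqnu, heq, hpE, hpN, hmm, hmn⟩ :=
      construction E hG hext m (2 * m) (m + 1) hm (by omega) (by omega) (by omega)
    refine ⟨f, hqnu, heq, hpE, hpN, ?_, ?_⟩
    · intro u v c d hc hd
      rcases eq_or_ne c d with rfl | hne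
      · have hfe : f u = f v := (heq u v).mpr (Or.inr ⟨c, hc, hd⟩)
        rw [hfe]
        exact iff_of_false (fun h => h.1 rfl) (fun h => h.1 rfl)
      · have hEiff := hmm u v c d hc hd hne
        have hfne : f u ≠ f v := by
          intro hfe
          rcases (heq u v).mp hfe with rfl | ⟨c', hc', hd'⟩
          · exact hne (mainValue_unique hp3 u c d hc hd)
          · exact hne ((mainValue_unique hp3 u c c' hc hc').trans
              (mainValue_unique hp3 v c' d hd' hd))
        constructor
        · intro h
          exact ⟨hne, fun hEcd => h.2 (hEiff.mpr hEcd)⟩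
        · intro h
          exact ⟨hfne, fun hE => h.2 (hEiff.mp hE)⟩
    · rintro u v c hc hno ⟨I, hI, hR⟩
      exact (hmn u v c hc hno).2 (le_trans hI (cnt_ge_of (NRel E) c v I hR))
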